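/- arXiv:math/9812113 — 2 statements merged into one kernel-verified Lean document; each statement's English description precedes it below -/
import Mathlib

section
/- Let H be a Hopf algebra with character δ and twisted antipode S_δ. Then S_δ² = Id if and only if Σ S_δ(h₍₂₎) h₍₁₎ = δ(h)·1 for all h ∈ H. -/
open TensorProduct

variable {H : Type*} [Semiring H] [HopfAlgebra ℂ H]

/-- The twisted antipode `S_δ(h) = ∑ δ(h₍₁₎) S(h₍₂₎)` associated to a character `δ`. -/
noncomputable def twistedAntipode (δ : H →ₐ[ℂ] ℂ) : H →ₗ[ℂ] H :=
  LinearMap.mul' ℂ H ∘ₗ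
    TensorProduct.map (Algebra.linearMap ℂ H ∘ₗ δ.toLinearMap)
      (HopfAlgebra.antipode (R := ℂ)) ∘ₗ
    Coalgebra.comul

/-!
Work in the convolution algebra `End(H)`, where `u := η ∘ δ` is invertible with inverse `u ∘ S`,
so `S_δ = u * S` has the left inverse `id * (u ∘ S)`, and `S_δ * id = u`. Since
`S_δ = S ∘ (h ↦ ∑ δ(h₍₁₎) h₍₂₎)` is an antihomomorphism, `S_δ * S_δ² = S_δ ∘ T` for
`T(h) = ∑ S_δ(h₍₂₎) h₍₁₎`. If `S_δ² = id`, then `S_δ ∘ T = u`, and applying `S_δ` once more gives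
`T = S_δ ∘ u = u`. Conversely, if `T = u` then `S_δ * S_δ² = u = S_δ * id`, and cancelling `S_δ`
gives `S_δ² = id`.
-/

open Coalgebra WithConv LinearMap

namespace LinearMap

theorem toConv_comp_mul_toConv_comp_of_antidistrib {R C A : Type*} [CommSemiring R]
    [AddCommMonoid C] [Module R C] [CoalgebraStruct R C] [Semiring A] [Algebra R A]
    (f : A →ₗ[R] A) (hf : ∀ a b, f (a * b) = f b * f a) (g k : C →ₗ[R] A) :
    toConv (f ∘ₗ k) * toConv (f ∘ₗ g) =
      toConv (f ∘ₗ mul' R A ∘ₗ map g k ∘ₗ (TensorProduct.comm R C C).toLinearMap ∘ₗ comul) := by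
  ext c
  rw [(ℛ R c).convMul_apply]
  simp [← (ℛ R c).eq, hf]

theorem algHom_comp_antipode_mul_algHom {R A B : Type*} [CommSemiring R] [Semiring A]
    [HopfAlgebra R A] [Semiring B] [Algebra R B] (f : A →ₐ[R] B) :
    toConv (f.toLinearMap ∘ₗ HopfAlgebra.antipode R) * toConv f.toLinearMap = 1 := by
  calc _ = toConv (f.toLinearMap ∘ₗ
        (toConv (HopfAlgebra.antipode R) * toConv LinearMap.id : WithConv (A →ₗ[R] A)).ofConv) := by
        rw [algHom_comp_convMul_distrib]; rfl
    _ = 1 := by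
        rw [antipode_mul_id]
        ext
        simp

end LinearMap

noncomputable def Bialgebra.twistAlgHom {R B : Type*} [CommSemiring R] [Semiring B]
    [Bialgebra R B] (δ : B →ₐ[R] R) : B →ₐ[R] B :=
  (Algebra.TensorProduct.lid R B).toAlgHom.comp
    ((Algebra.TensorProduct.map δ (AlgHom.id R B)).comp (Bialgebra.comulAlgHom R B))

section twistedAntipode

variable (δ : H →ₐ[ℂ] ℂ)

theorem twistedAntipode_eq_antipode_comp :
    twistedAntipode δ = HopfAlgebra.antipode ℂ ∘ₗ (Bialgebra.twistAlgHom δ).toLinearMap := by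
  ext h
  simp [twistedAntipode, Bialgebra.twistAlgHom, ← (ℛ ℂ h).eq, ← Algebra.smul_def]

theorem twistedAntipode_mul (a b : H) :
    twistedAntipode δ (a * b) = twistedAntipode δ b * twistedAntipode δ a := by
  simp [twistedAntipode_eq_antipode_comp, HopfAlgebra.antipode_mul_antidistrib]

theorem twistedAntipode_one : twistedAntipode δ 1 = 1 := by
  simp [twistedAntipode_eq_antipode_comp]

theorem twistedAntipode_comp_algebraMap_comp :
    twistedAntipode δ ∘ₗ (Algebra.linearMap ℂ H ∘ₗ δ.toLinearMap) =
      Algebra.linearMap ℂ H ∘ₗ δ.toLinearMap := by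
  ext
  simp [Algebra.algebraMap_eq_smul_one, twistedAntipode_one]

theorem toConv_twistedAntipode :
    toConv (twistedAntipode δ) =
      toConv (Algebra.linearMap ℂ H ∘ₗ δ.toLinearMap) * toConv (HopfAlgebra.antipode ℂ) :=
  rfl

theorem toConv_twistedAntipode_mul_id :
    toConv (twistedAntipode δ) * toConv LinearMap.id =
      toConv (Algebra.linearMap ℂ H ∘ₗ δ.toLinearMap) := by
  rw [toConv_twistedAntipode, mul_assoc, antipode_mul_id, mul_one]

theorem isLeftRegular_toConv_twistedAntipode : IsLeftRegular (toConv (twistedAntipode δ)) := by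
  set u := Algebra.linearMap ℂ H ∘ₗ δ.toLinearMap
  have hu : toConv (u ∘ₗ HopfAlgebra.antipode ℂ) * toConv u = 1 :=
    algHom_comp_antipode_mul_algHom ((Algebra.ofId ℂ H).comp δ)
  refine isLeftRegular_of_mul_eq_one
    (b := toConv LinearMap.id * toConv (u ∘ₗ HopfAlgebra.antipode ℂ)) ?_
  rw [toConv_twistedAntipode, mul_assoc, ← mul_assoc (toConv (_ ∘ₗ _)), hu, one_mul,
    id_mul_antipode]

end twistedAntipode

/-- `S_δ² = Id` iff `∑ S_δ(h₍₂₎) h₍₁₎ = δ(h)·1` for all `h`. -/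
theorem twistedAntipode_involutive_iff (δ : H →ₐ[ℂ] ℂ) :
    twistedAntipode δ ∘ₗ twistedAntipode δ = LinearMap.id ↔
      LinearMap.mul' ℂ H ∘ₗ
          TensorProduct.map (twistedAntipode δ) LinearMap.id ∘ₗ
          (TensorProduct.comm ℂ H H).toLinearMap ∘ₗ Coalgebra.comul =
        Algebra.linearMap ℂ H ∘ₗ δ.toLinearMap := by
  set T := LinearMap.mul' ℂ H ∘ₗ TensorProduct.map (twistedAntipode δ) LinearMap.id ∘ₗ
    (TensorProduct.comm ℂ H H).toLinearMap ∘ₗ Coalgebra.comul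
  have hT : toConv (twistedAntipode δ) * toConv (twistedAntipode δ ∘ₗ twistedAntipode δ) =
      toConv (twistedAntipode δ ∘ₗ T) := by
    simpa only [comp_id] using toConv_comp_mul_toConv_comp_of_antidistrib _
      (twistedAntipode_mul δ) (twistedAntipode δ) LinearMap.id
  constructor
  · intro h
    have hST : twistedAntipode δ ∘ₗ T = Algebra.linearMap ℂ H ∘ₗ δ.toLinearMap := by
      rw [← toConv_injective.eq_iff, ← hT, h, toConv_twistedAntipode_mul_id]
    calc T = (twistedAntipode δ ∘ₗ twistedAntipode δ) ∘ₗ T := by rw [h, id_comp]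
      _ = Algebra.linearMap ℂ H ∘ₗ δ.toLinearMap := by
        rw [comp_assoc, hST, twistedAntipode_comp_algebraMap_comp]
  · intro h
    apply toConv_injective
    apply isLeftRegular_toConv_twistedAntipode δ
    show _ * _ = _ * _
    rw [hT, h, twistedAntipode_comp_algebraMap_comp, toConv_twistedAntipode_mul_id]
end

section
/- Let H be a Hopf algebra with character δ and an H-algebra R (an algebra with H-action satisfying h(ab) = Σ h₍₁₎(a)h₍₂₎(b)). Assume S_δ² = Id. Then for all h ∈ H, ω ∈ R, a ∈ R, we have Σ h₍₂₎(a) h₍₁₎(ω) ≡ δ(h) aω modulo the linear span of elements {g(x) − δ(g)x : g ∈ H, x ∈ R}. -/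
open TensorProduct

variable {H : Type*} [Semiring H] [HopfAlgebra ℂ H]

namespace CMProof

open Coalgebra HopfAlgebra

variable {B : Type*} [Semiring B] [Algebra ℂ B]

/-- Convolution product of two linear maps `H →ₗ B`. -/
noncomputable def conv (f g : H →ₗ[ℂ] B) : H →ₗ[ℂ] B :=
  LinearMap.mul' ℂ B ∘ₗ TensorProduct.map f g ∘ₗ Coalgebra.comul

lemma conv_repr (f g : H →ₗ[ℂ] B) {a : H} (r : Repr ℂ a (H × H)) :
    conv f g a = ∑ i ∈ r.index, f (r.left i) * g (r.right i) := by
  simp [conv, ← r.eq, map_sum]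

lemma sum_counit_smul_right {a : H} (r : Repr ℂ a (H × H)) :
    ∑ i ∈ r.index, counit (R := ℂ) (r.left i) • r.right i = a := by
  have := congrArg (TensorProduct.lid ℂ H) (Coalgebra.sum_counit_tmul_eq r)
  rw [map_sum] at this
  simp only [TensorProduct.lid_tmul, one_smul] at this
  exact this

lemma sum_smul_counit_left {a : H} (r : Repr ℂ a (H × H)) :
    ∑ i ∈ r.index, counit (R := ℂ) (r.right i) • r.left i = a := by
  have := congrArg (TensorProduct.rid ℂ H) (Coalgebra.sum_tmul_counit_eq r)
  rw [map_sum] at this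
  simp only [TensorProduct.rid_tmul, one_smul] at this
  exact this

/-- Unit of the convolution algebra. -/
noncomputable def cunit : H →ₗ[ℂ] B :=
  Algebra.linearMap ℂ B ∘ₗ Coalgebra.counit

lemma cunit_conv (f : H →ₗ[ℂ] B) : conv cunit f = f := by
  ext a
  rw [conv_repr _ _ (ℛ ℂ a)]
  simp only [cunit, LinearMap.comp_apply, Algebra.linearMap_apply, ← Algebra.smul_def]
  simp only [← map_smul]
  rw [← map_sum, sum_counit_smul_right]

lemma conv_cunit (f : H →ₗ[ℂ] B) : conv f cunit = f := by
  ext a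
  rw [conv_repr _ _ (ℛ ℂ a)]
  simp only [cunit, LinearMap.comp_apply, Algebra.linearMap_apply]
  rw [Finset.sum_congr rfl (fun i _ => by
    rw [← Algebra.commutes, ← Algebra.smul_def, ← map_smul] :
    ∀ i ∈ (ℛ ℂ a).index, f ((ℛ ℂ a).left i) * algebraMap ℂ B (counit ((ℛ ℂ a).right i)) =
      f (counit (R := ℂ) ((ℛ ℂ a).right i) • (ℛ ℂ a).left i))]
  rw [← map_sum, sum_smul_counit_left]

/-- Applying a trilinear-style map to the coassociativity identity. -/
lemma tri_exchange (T : H ⊗[ℂ] (H ⊗[ℂ] H) →ₗ[ℂ] B) {a : H} (r : Repr ℂ a (H × H))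
    (r₁ : ∀ i, Repr ℂ (r.left i) (H × H)) (r₂ : ∀ i, Repr ℂ (r.right i) (H × H)) :
    ∑ i ∈ r.index, ∑ j ∈ (r₁ i).index,
      T ((r₁ i).left j ⊗ₜ[ℂ] ((r₁ i).right j ⊗ₜ[ℂ] r.right i)) =
    ∑ i ∈ r.index, ∑ j ∈ (r₂ i).index,
      T (r.left i ⊗ₜ[ℂ] ((r₂ i).left j ⊗ₜ[ℂ] (r₂ i).right j)) := by
  have := congrArg T (Coalgebra.sum_tmul_tmul_eq r r₁ r₂)
  simpa only [map_sum] using this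

lemma conv_assoc (f g k : H →ₗ[ℂ] B) : conv (conv f g) k = conv f (conv g k) := by
  ext a
  let r := ℛ ℂ a
  let r₁ : ∀ i, Repr ℂ (r.left i) (H × H) := fun i => ℛ ℂ _
  let r₂ : ∀ i, Repr ℂ (r.right i) (H × H) := fun i => ℛ ℂ _
  have E := tri_exchange (LinearMap.mul' ℂ B ∘ₗ
    TensorProduct.map f (LinearMap.mul' ℂ B ∘ₗ TensorProduct.map g k)) r r₁ r₂
  simp only [LinearMap.comp_apply, TensorProduct.map_tmul, LinearMap.mul'_apply] at E
  rw [conv_repr _ _ r, conv_repr _ _ r]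
  calc ∑ i ∈ r.index, conv f g (r.left i) * k (r.right i)
      = ∑ i ∈ r.index, ∑ j ∈ (r₁ i).index,
          f ((r₁ i).left j) * (g ((r₁ i).right j) * k (r.right i)) := by
        refine Finset.sum_congr rfl fun i _ => ?_
        rw [conv_repr _ _ (r₁ i), Finset.sum_mul]
        simp [mul_assoc]
    _ = ∑ i ∈ r.index, ∑ j ∈ (r₂ i).index,
          f (r.left i) * (g ((r₂ i).left j) * k ((r₂ i).right j)) := E
    _ = ∑ i ∈ r.index, f (r.left i) * conv g k (r.right i) := by
        refine Finset.sum_congr rfl fun i _ => ?_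
        rw [conv_repr _ _ (r₂ i), Finset.mul_sum]

lemma conv_comul_comulS :
    conv (Coalgebra.comul (R := ℂ) (A := H))
      (Coalgebra.comul ∘ₗ HopfAlgebra.antipode (R := ℂ)) = cunit := by
  ext a
  let r := ℛ ℂ a
  rw [conv_repr _ _ r]
  simp only [LinearMap.comp_apply]
  calc ∑ i ∈ r.index, comul (R := ℂ) (r.left i) *
        comul (R := ℂ) (HopfAlgebra.antipode (R := ℂ) (r.right i))
      = comul (R := ℂ) (∑ i ∈ r.index,
          r.left i * HopfAlgebra.antipode (R := ℂ) (r.right i)) := by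
        rw [map_sum]
        exact Finset.sum_congr rfl fun i _ => (Bialgebra.comul_mul _ _).symm
    _ = cunit a := by
        rw [sum_mul_antipode_eq_algebraMap_counit]
        simp [cunit]

lemma conv_comulSswap_comul :
    conv (TensorProduct.map (HopfAlgebra.antipode (R := ℂ)) (HopfAlgebra.antipode (R := ℂ)) ∘ₗ
        (TensorProduct.comm ℂ H H).toLinearMap ∘ₗ Coalgebra.comul)
      (Coalgebra.comul (R := ℂ) (A := H)) = cunit := by
  ext a
  let r := ℛ ℂ a
  let r₁ : ∀ i, Repr ℂ (r.left i) (H × H) := fun i => ℛ ℂ _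
  let r₂ : ∀ i, Repr ℂ (r.right i) (H × H) := fun i => ℛ ℂ _
  rw [conv_repr _ _ r]
  -- the big map for the first exchange
  set T : H ⊗[ℂ] (H ⊗[ℂ] H) →ₗ[ℂ] H ⊗[ℂ] H :=
    LinearMap.mul' ℂ (H ⊗[ℂ] H) ∘ₗ
      TensorProduct.map
        (TensorProduct.map (HopfAlgebra.antipode (R := ℂ)) (HopfAlgebra.antipode (R := ℂ)) ∘ₗ
          (TensorProduct.comm ℂ H H).toLinearMap)
        Coalgebra.comul ∘ₗ
      (TensorProduct.assoc ℂ H H H).symm.toLinearMap with hT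
  have hTapp : ∀ (x y z : H),
      T (x ⊗ₜ[ℂ] (y ⊗ₜ[ℂ] z)) =
        ((HopfAlgebra.antipode (R := ℂ) y) ⊗ₜ[ℂ] (HopfAlgebra.antipode (R := ℂ) x)) *
          comul (R := ℂ) z := by
    intro x y z
    simp [hT]
  have E1 := tri_exchange T r r₁ r₂
  -- LHS of E1 is our sum
  have hL : ∑ i ∈ r.index, (TensorProduct.map (HopfAlgebra.antipode (R := ℂ))
        (HopfAlgebra.antipode (R := ℂ)) ∘ₗ
        (TensorProduct.comm ℂ H H).toLinearMap ∘ₗ Coalgebra.comul) (r.left i) *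
        comul (R := ℂ) (r.right i) =
      ∑ i ∈ r.index, ∑ j ∈ (r₁ i).index,
        T ((r₁ i).left j ⊗ₜ[ℂ] ((r₁ i).right j ⊗ₜ[ℂ] r.right i)) := by
    refine Finset.sum_congr rfl fun i _ => ?_
    rw [LinearMap.comp_apply, LinearMap.comp_apply, ← (r₁ i).eq]
    simp only [map_sum, hTapp, Finset.sum_mul]
    simp
  rw [hL, E1]
  -- now process the right-hand side
  have key : ∀ i ∈ r.index, ∑ j ∈ (r₂ i).index,
      T (r.left i ⊗ₜ[ℂ] ((r₂ i).left j ⊗ₜ[ℂ] (r₂ i).right j)) =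
      (1 : H) ⊗ₜ[ℂ] (HopfAlgebra.antipode (R := ℂ) (r.left i) * r.right i) := by
    intro i _
    let u : ∀ m, Repr ℂ ((r₂ i).left m) (H × H) := fun m => ℛ ℂ _
    let t : ∀ m, Repr ℂ ((r₂ i).right m) (H × H) := fun m => ℛ ℂ _
    set T' : H ⊗[ℂ] (H ⊗[ℂ] H) →ₗ[ℂ] H ⊗[ℂ] H :=
      TensorProduct.map
        (LinearMap.mul' ℂ H ∘ₗ TensorProduct.map (HopfAlgebra.antipode (R := ℂ)) LinearMap.id)
        (LinearMap.mulLeft ℂ (HopfAlgebra.antipode (R := ℂ) (r.left i))) ∘ₗ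
        (TensorProduct.assoc ℂ H H H).symm.toLinearMap with hT'
    have hT'app : ∀ (x y z : H),
        T' (x ⊗ₜ[ℂ] (y ⊗ₜ[ℂ] z)) =
          (HopfAlgebra.antipode (R := ℂ) x * y) ⊗ₜ[ℂ]
            (HopfAlgebra.antipode (R := ℂ) (r.left i) * z) := by
      intro x y z; simp [hT']
    have E2 := tri_exchange T' (r₂ i) u t
    have hR : ∑ j ∈ (r₂ i).index,
        T (r.left i ⊗ₜ[ℂ] ((r₂ i).left j ⊗ₜ[ℂ] (r₂ i).right j)) =
        ∑ m ∈ (r₂ i).index, ∑ n ∈ (t m).index,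
          T' ((r₂ i).left m ⊗ₜ[ℂ] ((t m).left n ⊗ₜ[ℂ] (t m).right n)) := by
      refine Finset.sum_congr rfl fun m _ => ?_
      rw [hTapp, ← (t m).eq]
      simp only [Finset.mul_sum, hT'app, Algebra.TensorProduct.tmul_mul_tmul, map_sum]
    rw [hR, ← E2]
    calc ∑ m ∈ (r₂ i).index, ∑ j ∈ (u m).index,
          T' ((u m).left j ⊗ₜ[ℂ] ((u m).right j ⊗ₜ[ℂ] (r₂ i).right m))
        = ∑ m ∈ (r₂ i).index,
            (counit (R := ℂ) ((r₂ i).left m) •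
              ((1 : H) ⊗ₜ[ℂ] (HopfAlgebra.antipode (R := ℂ) (r.left i) * (r₂ i).right m))) := by
          refine Finset.sum_congr rfl fun m _ => ?_
          simp only [hT'app]
          rw [← TensorProduct.sum_tmul, sum_antipode_mul_eq_smul (u m)]
          simp [TensorProduct.smul_tmul']
      _ = (1 : H) ⊗ₜ[ℂ] (HopfAlgebra.antipode (R := ℂ) (r.left i) * r.right i) := by
          simp only [← TensorProduct.tmul_smul, ← mul_smul_comm]
          rw [← TensorProduct.tmul_sum, ← Finset.mul_sum, sum_counit_smul_right]
  rw [Finset.sum_congr rfl key, ← TensorProduct.tmul_sum, sum_antipode_mul_eq_algebraMap_counit]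
  simp [cunit, Algebra.algebraMap_eq_smul_one, Algebra.TensorProduct.one_def]

lemma comul_antipode :
    Coalgebra.comul ∘ₗ HopfAlgebra.antipode (R := ℂ) =
      (TensorProduct.map (HopfAlgebra.antipode (R := ℂ)) (HopfAlgebra.antipode (R := ℂ)) ∘ₗ
        (TensorProduct.comm ℂ H H).toLinearMap ∘ₗ Coalgebra.comul : H →ₗ[ℂ] H ⊗[ℂ] H) := by
  set F : H →ₗ[ℂ] H ⊗[ℂ] H := Coalgebra.comul ∘ₗ HopfAlgebra.antipode (R := ℂ) with hF
  set G : H →ₗ[ℂ] H ⊗[ℂ] H :=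
    TensorProduct.map (HopfAlgebra.antipode (R := ℂ)) (HopfAlgebra.antipode (R := ℂ)) ∘ₗ
      (TensorProduct.comm ℂ H H).toLinearMap ∘ₗ Coalgebra.comul with hG
  calc F = conv cunit F := (cunit_conv F).symm
    _ = conv (conv G Coalgebra.comul) F := by rw [conv_comulSswap_comul]
    _ = conv G (conv Coalgebra.comul F) := conv_assoc _ _ _
    _ = conv G cunit := by rw [hF, conv_comul_comulS]
    _ = G := conv_cunit G

variable (δ : H →ₐ[ℂ] ℂ)

lemma twisted_repr {k : H} (r : Repr ℂ k (H × H)) :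
    twistedAntipode δ k =
      ∑ i ∈ r.index, δ (r.left i) • HopfAlgebra.antipode (R := ℂ) (r.right i) := by
  show conv (Algebra.linearMap ℂ H ∘ₗ δ.toLinearMap) (HopfAlgebra.antipode (R := ℂ)) k = _
  rw [conv_repr _ _ r]
  simp [Algebra.smul_def]

lemma delta_twisted (k : H) : δ (twistedAntipode δ k) = counit (R := ℂ) k := by
  let r := ℛ ℂ k
  rw [twisted_repr δ r, map_sum]
  simp only [map_smul, smul_eq_mul]
  have : ∑ i ∈ r.index, δ (r.left i) * δ (HopfAlgebra.antipode (R := ℂ) (r.right i)) =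
      δ (∑ i ∈ r.index, r.left i * HopfAlgebra.antipode (R := ℂ) (r.right i)) := by
    rw [map_sum]
    exact Finset.sum_congr rfl fun i _ => (map_mul δ _ _).symm
  rw [this, sum_mul_antipode_eq_algebraMap_counit r]
  simp

lemma sum_twisted_mul {k : H} (r : Repr ℂ k (H × H)) :
    ∑ i ∈ r.index, twistedAntipode δ (r.left i) * r.right i = algebraMap ℂ H (δ k) := by
  let r₁ : ∀ i, Repr ℂ (r.left i) (H × H) := fun i => ℛ ℂ _
  let r₂ : ∀ i, Repr ℂ (r.right i) (H × H) := fun i => ℛ ℂ _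
  set T : H ⊗[ℂ] (H ⊗[ℂ] H) →ₗ[ℂ] H :=
    (TensorProduct.lid ℂ H).toLinearMap ∘ₗ
      TensorProduct.map δ.toLinearMap
        (LinearMap.mul' ℂ H ∘ₗ TensorProduct.map (HopfAlgebra.antipode (R := ℂ)) LinearMap.id)
      with hT
  have hTapp : ∀ x y z : H,
      T (x ⊗ₜ[ℂ] (y ⊗ₜ[ℂ] z)) = δ x • (HopfAlgebra.antipode (R := ℂ) y * z) := by
    intro x y z; simp [hT]
  have E := tri_exchange T r r₁ r₂
  simp only [hTapp] at E
  calc ∑ i ∈ r.index, twistedAntipode δ (r.left i) * r.right i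
      = ∑ i ∈ r.index, ∑ j ∈ (r₁ i).index,
          δ ((r₁ i).left j) • (HopfAlgebra.antipode (R := ℂ) ((r₁ i).right j) * r.right i) := by
        refine Finset.sum_congr rfl fun i _ => ?_
        rw [twisted_repr δ (r₁ i), Finset.sum_mul]
        simp [smul_mul_assoc]
    _ = ∑ i ∈ r.index, ∑ j ∈ (r₂ i).index,
          δ (r.left i) • (HopfAlgebra.antipode (R := ℂ) ((r₂ i).left j) * (r₂ i).right j) := E
    _ = ∑ i ∈ r.index, δ (r.left i) • algebraMap ℂ H (counit (R := ℂ) (r.right i)) := by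
        refine Finset.sum_congr rfl fun i _ => ?_
        rw [← Finset.smul_sum, sum_antipode_mul_eq_algebraMap_counit (r₂ i)]
    _ = algebraMap ℂ H (δ k) := by
        simp only [Algebra.smul_def, ← map_mul, ← map_sum]
        congr 1
        calc ∑ i ∈ r.index, δ (r.left i) * counit (R := ℂ) (r.right i)
            = δ (∑ i ∈ r.index, counit (R := ℂ) (r.right i) • r.left i) := by
              rw [map_sum]
              exact Finset.sum_congr rfl fun i _ => by rw [map_smul, smul_eq_mul, mul_comm]
          _ = δ k := by rw [sum_smul_counit_left r]

lemma comul_twisted :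
    Coalgebra.comul ∘ₗ twistedAntipode δ =
      TensorProduct.map (HopfAlgebra.antipode (R := ℂ)) (twistedAntipode δ) ∘ₗ
        (TensorProduct.comm ℂ H H).toLinearMap ∘ₗ Coalgebra.comul := by
  ext k
  let r := ℛ ℂ k
  let r₁ : ∀ i, Repr ℂ (r.left i) (H × H) := fun i => ℛ ℂ _
  let r₂ : ∀ i, Repr ℂ (r.right i) (H × H) := fun i => ℛ ℂ _
  set T : H ⊗[ℂ] (H ⊗[ℂ] H) →ₗ[ℂ] H ⊗[ℂ] H :=
    (TensorProduct.lid ℂ (H ⊗[ℂ] H)).toLinearMap ∘ₗ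
      TensorProduct.map δ.toLinearMap
        (TensorProduct.map (HopfAlgebra.antipode (R := ℂ)) (HopfAlgebra.antipode (R := ℂ)) ∘ₗ
          (TensorProduct.comm ℂ H H).toLinearMap) with hT
  have hTapp : ∀ x y z : H,
      T (x ⊗ₜ[ℂ] (y ⊗ₜ[ℂ] z)) =
        δ x • (HopfAlgebra.antipode (R := ℂ) z ⊗ₜ[ℂ] HopfAlgebra.antipode (R := ℂ) y) := by
    intro x y z; simp [hT]
  have E := tri_exchange T r r₁ r₂
  simp only [hTapp] at E
  have hS := comul_antipode (H := H)
  calc Coalgebra.comul (twistedAntipode δ k)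
      = ∑ i ∈ r.index, δ (r.left i) •
          Coalgebra.comul (R := ℂ) (HopfAlgebra.antipode (R := ℂ) (r.right i)) := by
        rw [twisted_repr δ r, map_sum]
        simp only [map_smul]
    _ = ∑ i ∈ r.index, ∑ j ∈ (r₂ i).index, δ (r.left i) •
          (HopfAlgebra.antipode (R := ℂ) ((r₂ i).right j) ⊗ₜ[ℂ]
            HopfAlgebra.antipode (R := ℂ) ((r₂ i).left j)) := by
        refine Finset.sum_congr rfl fun i _ => ?_
        have := LinearMap.congr_fun hS (r.right i)
        simp only [LinearMap.comp_apply] at this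
        rw [this, ← (r₂ i).eq]
        simp [Finset.smul_sum]
    _ = ∑ i ∈ r.index, ∑ j ∈ (r₁ i).index, δ ((r₁ i).left j) •
          (HopfAlgebra.antipode (R := ℂ) (r.right i) ⊗ₜ[ℂ]
            HopfAlgebra.antipode (R := ℂ) ((r₁ i).right j)) := E.symm
    _ = (TensorProduct.map (HopfAlgebra.antipode (R := ℂ)) (twistedAntipode δ) ∘ₗ
          (TensorProduct.comm ℂ H H).toLinearMap ∘ₗ Coalgebra.comul) k := by
        rw [LinearMap.comp_apply, LinearMap.comp_apply]
        show _ = TensorProduct.map _ _ ((TensorProduct.comm ℂ H H) (Coalgebra.comul k))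
        rw [← r.eq]
        simp only [map_sum, TensorProduct.comm_tmul, TensorProduct.map_tmul]
        refine Finset.sum_congr rfl fun i _ => ?_
        rw [twisted_repr δ (r₁ i)]
        simp [TensorProduct.tmul_smul, TensorProduct.tmul_sum]

end CMProof

open CMProof Coalgebra HopfAlgebra

/-- If `S_δ² = Id` and `R` is an `H`-algebra, then
`∑ h₍₂₎(a) h₍₁₎(ω) ≡ δ(h) a ω` modulo the span of δ-coinvariants of `R`. -/
theorem flat_action_coinvariants {R : Type*} [Ring R] [Algebra ℂ R]
    [Module H R] [IsScalarTower ℂ H R] [SMulCommClass H ℂ R]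
    (δ : H →ₐ[ℂ] ℂ)
    (hinv : twistedAntipode δ ∘ₗ twistedAntipode δ = LinearMap.id)
    (act : R → H →ₗ[ℂ] R)
    (hact : ∀ (a : R) (g : H), act a g = g • a)
    (hflat : ∀ (g : H) (a b : R),
      g • (a * b) =
        LinearMap.mul' ℂ R (TensorProduct.map (act a) (act b) (Coalgebra.comul g)))
    (h : H) (ω a : R) :
    LinearMap.mul' ℂ R
        (TensorProduct.map (act a) (act ω)
          ((TensorProduct.comm ℂ H H) (Coalgebra.comul h))) -
        δ h • (a * ω) ∈
      Submodule.span ℂ {x : R | ∃ (g : H) (y : R), x = g • y - δ g • y} := by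
  classical
  set M : Submodule ℂ R :=
    Submodule.span ℂ {x : R | ∃ (g : H) (y : R), x = g • y - δ g • y} with hM
  set φ : R →ₗ[ℂ] R ⧸ M := M.mkQ with hφ
  have key0 : ∀ (g : H) (y : R), φ (g • y) = δ g • φ y := by
    intro g y
    have hmem : g • y - δ g • y ∈ M := Submodule.subset_span ⟨g, y, rfl⟩
    have h0 : φ (g • y - δ g • y) = 0 := by
      rw [hφ, Submodule.mkQ_apply, Submodule.Quotient.mk_eq_zero]
      exact hmem
    rw [map_sub, sub_eq_zero] at h0
    exact h0.trans (map_smul φ (δ g) y)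
  have keyR3 : ∀ (k : H) (u v : R),
      φ ((k • u) * v) = φ (u * (twistedAntipode δ k • v)) := by
    intro k u v
    let r := ℛ ℂ k
    let r₁ : ∀ i, Coalgebra.Repr ℂ (r.left i) (H × H) := fun i => ℛ ℂ _
    let r₂ : ∀ i, Coalgebra.Repr ℂ (r.right i) (H × H) := fun i => ℛ ℂ _
    have hrep : ∀ i, Coalgebra.comul (R := ℂ) (twistedAntipode δ (r.left i)) =
        ∑ j ∈ (r₁ i).index, (HopfAlgebra.antipode (R := ℂ) ((r₁ i).right j)) ⊗ₜ[ℂ]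
          (twistedAntipode δ ((r₁ i).left j)) := by
      intro i
      have hc := LinearMap.congr_fun (comul_twisted δ) (r.left i)
      simp only [LinearMap.comp_apply] at hc
      rw [hc, ← (r₁ i).eq]
      simp
    have way1 : ∑ i ∈ r.index,
        φ (twistedAntipode δ (r.left i) • ((r.right i • u) * v)) = φ ((k • u) * v) := by
      calc ∑ i ∈ r.index, φ (twistedAntipode δ (r.left i) • ((r.right i • u) * v))
          = ∑ i ∈ r.index,
              counit (R := ℂ) (r.left i) • φ ((r.right i • u) * v) := by
            refine Finset.sum_congr rfl fun i _ => ?_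
            rw [key0, delta_twisted]
        _ = φ (∑ i ∈ r.index,
              counit (R := ℂ) (r.left i) • ((r.right i • u) * v)) := by
            simp only [map_smul, map_sum]
        _ = φ ((k • u) * v) := by
            congr 1
            simp only [← smul_mul_assoc, ← smul_assoc]
            rw [← Finset.sum_mul, ← Finset.sum_smul, sum_counit_smul_right r]
    have way2 : ∑ i ∈ r.index,
        φ (twistedAntipode δ (r.left i) • ((r.right i • u) * v)) =
          φ (u * (twistedAntipode δ k • v)) := by
      have expand : ∀ i, twistedAntipode δ (r.left i) • ((r.right i • u) * v) =
          ∑ j ∈ (r₁ i).index,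
            ((HopfAlgebra.antipode (R := ℂ) ((r₁ i).right j) * r.right i) • u) *
              (twistedAntipode δ ((r₁ i).left j) • v) := by
        intro i
        rw [hflat _ (r.right i • u) v, hrep i]
        simp only [map_sum, TensorProduct.map_tmul, LinearMap.mul'_apply, hact, mul_smul]
      set T₃ : H ⊗[ℂ] (H ⊗[ℂ] H) →ₗ[ℂ] R :=
        LinearMap.mul' ℂ R ∘ₗ
          TensorProduct.map
            (act u ∘ₗ LinearMap.mul' ℂ H ∘ₗ
              TensorProduct.map (HopfAlgebra.antipode (R := ℂ)) LinearMap.id)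
            (act v ∘ₗ twistedAntipode δ) ∘ₗ
          (TensorProduct.comm ℂ H (H ⊗[ℂ] H)).toLinearMap with hT₃
      have hT₃app : ∀ x y z : H, T₃ (x ⊗ₜ[ℂ] (y ⊗ₜ[ℂ] z)) =
          ((HopfAlgebra.antipode (R := ℂ) y * z) • u) * (twistedAntipode δ x • v) := by
        intro x y z
        simp [hT₃, hact]
      have E := tri_exchange T₃ r r₁ r₂
      simp only [hT₃app] at E
      calc ∑ i ∈ r.index, φ (twistedAntipode δ (r.left i) • ((r.right i • u) * v))
          = φ (∑ i ∈ r.index, ∑ j ∈ (r₁ i).index,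
              ((HopfAlgebra.antipode (R := ℂ) ((r₁ i).right j) * r.right i) • u) *
                (twistedAntipode δ ((r₁ i).left j) • v)) := by
            rw [map_sum]
            exact Finset.sum_congr rfl fun i _ => by rw [expand i]
        _ = φ (∑ i ∈ r.index, ∑ j ∈ (r₂ i).index,
              ((HopfAlgebra.antipode (R := ℂ) ((r₂ i).left j) * (r₂ i).right j) • u) *
                (twistedAntipode δ (r.left i) • v)) := by rw [E]
        _ = φ (u * (twistedAntipode δ k • v)) := by
            congr 1
            calc ∑ i ∈ r.index, ∑ j ∈ (r₂ i).index,
                  ((HopfAlgebra.antipode (R := ℂ) ((r₂ i).left j) * (r₂ i).right j) • u) *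
                    (twistedAntipode δ (r.left i) • v)
                = ∑ i ∈ r.index,
                    ((algebraMap ℂ H (counit (R := ℂ) (r.right i))) • u) *
                      (twistedAntipode δ (r.left i) • v) := by
                  refine Finset.sum_congr rfl fun i _ => ?_
                  rw [← Finset.sum_mul, ← Finset.sum_smul, sum_antipode_mul_eq_algebraMap_counit (r₂ i)]
              _ = ∑ i ∈ r.index,
                    u * ((counit (R := ℂ) (r.right i) • twistedAntipode δ (r.left i)) • v) := by
                  refine Finset.sum_congr rfl fun i _ => ?_
                  rw [algebraMap_smul, smul_mul_assoc, ← mul_smul_comm, ← smul_assoc]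
              _ = u * (twistedAntipode δ k • v) := by
                  rw [← Finset.mul_sum, ← Finset.sum_smul]
                  congr 2
                  calc ∑ i ∈ r.index, counit (R := ℂ) (r.right i) • twistedAntipode δ (r.left i)
                      = twistedAntipode δ (∑ i ∈ r.index,
                          counit (R := ℂ) (r.right i) • r.left i) := by
                        simp only [map_smul, map_sum]
                    _ = twistedAntipode δ k := by rw [sum_smul_counit_left r]
    rw [← way1, way2]
  have keyR4 : ∀ (k : H) (u v : R),
      φ ((twistedAntipode δ k • u) * v) = φ (u * (k • v)) := by
    intro k u v
    have hk : twistedAntipode δ (twistedAntipode δ k) = k := by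
      have := LinearMap.congr_fun hinv k
      simpa using this
    have := keyR3 (twistedAntipode δ k) u v
    rwa [hk] at this
  let r := ℛ ℂ h
  have expr_eq : LinearMap.mul' ℂ R
      (TensorProduct.map (act a) (act ω) ((TensorProduct.comm ℂ H H) (Coalgebra.comul h))) =
      ∑ i ∈ r.index, (r.right i • a) * (r.left i • ω) := by
    rw [← r.eq]
    simp [hact]
  have main : φ (LinearMap.mul' ℂ R
      (TensorProduct.map (act a) (act ω) ((TensorProduct.comm ℂ H H) (Coalgebra.comul h)))) =
      δ h • φ (a * ω) := by
    rw [expr_eq, map_sum]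
    calc ∑ i ∈ r.index, φ ((r.right i • a) * (r.left i • ω))
        = ∑ i ∈ r.index, φ ((twistedAntipode δ (r.left i) • (r.right i • a)) * ω) := by
          refine Finset.sum_congr rfl fun i _ => ?_
          rw [keyR4]
      _ = φ ((((algebraMap ℂ H (δ h))) • a) * ω) := by
          rw [← map_sum]
          congr 1
          simp only [← mul_smul]
          rw [← Finset.sum_mul, ← Finset.sum_smul, sum_twisted_mul δ r]
      _ = δ h • φ (a * ω) := by
          rw [algebraMap_smul, smul_mul_assoc, map_smul]
  rw [← Submodule.Quotient.mk_eq_zero M, ← Submodule.mkQ_apply, ← hφ]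
  rw [map_sub, map_smul, main, sub_self]
end
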